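/- arXiv:1803.00478 — 4 statements merged into one kernel-verified Lean document; each statement's English description precedes it below -/
import Mathlib

section
/- Let R be an integral domain of characteristic zero and let R^bin be its binomial closure inside L. Then R^bin is a binomial ring containing ι(R): R^bin is an integral domain of characteristic zero, and for every λ ∈ R^bin and every n ∈ ℕ there exists y ∈ R^bin with n!·y = λ(λ−1)(λ−2)⋯(λ−n+1). -/
/-- The multiplicative set of nonzero elements of the image of `ℤ` in `R`. -/
def intNonzero (R : Type*) [CommRing R] [IsDomain R] : Submonoid R where
  carrier := {r : R | (∃ m : ℤ, (m : R) = r) ∧ r ≠ 0}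
  one_mem' := ⟨⟨1, by simp⟩, one_ne_zero⟩
  mul_mem' := by
    rintro a b ⟨⟨m, hm⟩, ha⟩ ⟨⟨k, hk⟩, hb⟩
    exact ⟨⟨m * k, by push_cast; rw [hm, hk]⟩, mul_ne_zero ha hb⟩

/-- The binomial coefficient `C_x^n = x (x-1) ⋯ (x-n+1) / n!` in a commutative ring `L`
(where `n!` is invertible; `Ring.inverse` returns the inverse of a unit). -/
noncomputable def binom {L : Type*} [CommRing L] (x : L) (n : ℕ) : L :=
  (∏ i ∈ Finset.range n, (x - (i : L))) * Ring.inverse (n.factorial : L)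

/-- A subring `B` of `L` is binomially closed if it contains all binomial
coefficients `C_x^n` for `x ∈ B`, `n : ℕ`. -/
def BinClosed {L : Type*} [CommRing L] (B : Subring L) : Prop :=
  ∀ x ∈ B, ∀ n : ℕ, binom x n ∈ B

/-- The binomial closure of `R`: the smallest binomially closed subring of the
localization `L` of `R` at the nonzero integers containing the image of `R`. -/
noncomputable def binClosure (R : Type*) [CommRing R] [IsDomain R] [CharZero R] :
    Subring (Localization (intNonzero R)) :=
  sInf {B | BinClosed B ∧ (algebraMap R (Localization (intNonzero R))).range ≤ B}

/-- The canonical injection `ι : R → R^bin`. -/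
noncomputable def iotaBin (R : Type*) [CommRing R] [IsDomain R] [CharZero R] :
    R →+* binClosure R :=
  (algebraMap R (Localization (intNonzero R))).codRestrict (binClosure R)
    (fun r => Subring.mem_sInf.mpr fun _ hB => hB.2 ⟨r, rfl⟩)

/-- A binomial ring: an integral domain of characteristic zero in which each
`x (x-1) ⋯ (x-n+1)` is divisible by `n!`. (The domain and characteristic-zero
assumptions are carried as instance hypotheses where used.) -/
def IsBinomialRing (S : Type*) [CommRing S] : Prop :=
  ∀ (x : S) (n : ℕ), ∃ y : S, (n.factorial : S) * y = ∏ i ∈ Finset.range n, (x - (i : S))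

open Nat

section Localization

variable (R : Type*) [CommRing R] [IsDomain R]

theorem intNonzero_le_nonZeroDivisors : intNonzero R ≤ nonZeroDivisors R :=
  fun _ hr => mem_nonZeroDivisors_of_ne_zero hr.2

instance : IsDomain (Localization (intNonzero R)) :=
  IsLocalization.isDomain_localization (intNonzero_le_nonZeroDivisors R)

theorem algebraMap_intNonzero_injective :
    Function.Injective (algebraMap R (Localization (intNonzero R))) :=
  IsLocalization.injective _ (intNonzero_le_nonZeroDivisors R)

variable [CharZero R]

instance : CharZero (Localization (intNonzero R)) :=
  charZero_of_injective_algebraMap (algebraMap_intNonzero_injective R)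

variable {R}

theorem natCast_mem_intNonzero {n : ℕ} (hn : n ≠ 0) : (n : R) ∈ intNonzero R :=
  ⟨⟨n, Int.cast_natCast n⟩, Nat.cast_ne_zero.mpr hn⟩

theorem isUnit_natCast_localization_intNonzero {n : ℕ} (hn : n ≠ 0) :
    IsUnit (n : Localization (intNonzero R)) := by
  simpa using IsLocalization.map_units (Localization (intNonzero R))
    (⟨n, natCast_mem_intNonzero hn⟩ : intNonzero R)

end Localization

theorem natCast_factorial_mul_binom {L : Type*} [CommRing L] (x : L) {n : ℕ}
    (h : IsUnit (n ! : L)) : (n ! : L) * binom x n = ∏ i ∈ Finset.range n, (x - (i : L)) := by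
  rw [binom, mul_comm, mul_assoc, Ring.inverse_mul_cancel _ h, mul_one]

theorem BinClosed.sInf {L : Type*} [CommRing L] {S : Set (Subring L)}
    (hS : ∀ B ∈ S, BinClosed B) : BinClosed (sInf S) :=
  fun x hx n => Subring.mem_sInf.mpr fun B hB => hS B hB x (Subring.mem_sInf.mp hx B hB) n

section BinClosure

variable (R : Type*) [CommRing R] [IsDomain R] [CharZero R]

theorem binClosed_binClosure : BinClosed (binClosure R) :=
  BinClosed.sInf fun _ hB => hB.1

theorem range_algebraMap_le_binClosure :
    (algebraMap R (Localization (intNonzero R))).range ≤ binClosure R :=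
  le_sInf fun _ hB => hB.2

end BinClosure

/-- the binomial closure `R^bin` is a binomial ring containing `ι(R)`:
it is an integral domain of characteristic zero, it contains the image of `R`, and for every
`x ∈ R^bin` and `n : ℕ` there is `y ∈ R^bin` with `n! * y = x (x-1) ⋯ (x-n+1)`. -/
theorem binClosure_isBinomialRing (R : Type*) [CommRing R] [IsDomain R] [CharZero R] :
    IsDomain (binClosure R) ∧ CharZero (binClosure R) ∧
      (algebraMap R (Localization (intNonzero R))).range ≤ binClosure R ∧
      ∀ x ∈ binClosure R, ∀ n : ℕ,
        ∃ y ∈ binClosure R,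
          (n.factorial : Localization (intNonzero R)) * y =
            ∏ i ∈ Finset.range n, (x - (i : Localization (intNonzero R))) := by
  refine ⟨inferInstance, inferInstance, range_algebraMap_le_binClosure R, fun x hx n => ?_⟩
  exact ⟨binom x n, binClosed_binClosure R x hx n,
    natCast_factorial_mul_binom x (isUnit_natCast_localization_intNonzero n.factorial_ne_zero)⟩
end

section
/- Let R be an integral domain of characteristic zero with binomial closure R^bin and canonical injection ι : R → R^bin, let S be a binomial ring, let φ : R → S be a ring homomorphism, and let φ' : R^bin → S be a ring homomorphism with φ' ∘ ι = φ. If φ is injective, then φ' is injective. -/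
theorem IsLocalization.injective_of_injective_comp_codRestrict {R L T : Type*} [CommRing R]
    [CommRing L] [Algebra R L] [NonAssocSemiring T] (M : Submonoid R) [IsLocalization M L]
    (B : Subring L) (hB : ∀ r, algebraMap R L r ∈ B) (f : B →+* T)
    (hf : Function.Injective (f.comp ((algebraMap R L).codRestrict B hB))) :
    Function.Injective f := by
  set ι := (algebraMap R L).codRestrict B hB
  rw [injective_iff_map_eq_zero]
  intro x hx
  obtain ⟨⟨r, s⟩, hrs⟩ := IsLocalization.surj M (x : L)
  have hιr : ι r = x * ι s := Subtype.ext hrs.symm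
  have hr : r = 0 := hf <| by simp [hιr, hx]
  rw [hr, map_zero] at hrs
  exact Subtype.ext ((IsLocalization.map_units L s).mul_left_eq_zero.mp hrs)

theorem binClosure_hom_extension_injective_general (R S : Type*) [CommRing R] [IsDomain R] [CharZero R]
    [CommRing S] (φ : R →+* S)
    (φ' : binClosure R →+* S) (h : φ'.comp (iotaBin R) = φ)
    (hinj : Function.Injective φ) :
    Function.Injective φ' :=
  IsLocalization.injective_of_injective_comp_codRestrict (intNonzero R) _ _ φ' (h ▸ hinj)

/-- if `φ : R → S` is injective, then so is its extension
`φ' : R^bin → S` to the binomial closure. -/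
theorem binClosure_hom_extension_injective (R S : Type*) [CommRing R] [IsDomain R] [CharZero R]
    [CommRing S] [IsDomain S] [CharZero S] (hS : IsBinomialRing S) (φ : R →+* S)
    (φ' : binClosure R →+* S) (h : φ'.comp (iotaBin R) = φ)
    (hinj : Function.Injective φ) :
    Function.Injective φ' :=
  binClosure_hom_extension_injective_general R S φ φ' h hinj
end

section
/- Let R be an integral domain of characteristic zero with binomial closure R^bin and canonical injection ι : R → R^bin, and let S be a binomial ring. Suppose a family of ring homomorphisms {φ_j : R → S}_{j ∈ J} discriminates R, i.e., for every finite subset M ⊆ R there is j ∈ J such that φ_j is injective on M. For each j let φ_j' : R^bin → S be a ring homomorphism with φ_j' ∘ ι = φ_j. Then the family {φ_j'}_{j ∈ J} discriminates R^bin: for every finite subset M ⊆ R^bin there exists j ∈ J such that φ_j' is injective on M. -/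
/-! Every element of `R^bin` lies in the localization `L` of `R` at the nonzero integers, so
finitely many of them become elements of `ι(R)` after multiplication by a single nonzero
integer `c`. Comparing images under `φ_j'` of the multiples `c x ∈ ι(R)` is comparing images
under `φ_j`, and multiplication by `c` is injective on `R^bin ⊆ L`. -/

lemma Set.InjOn.of_isLeftRegular_mul {R A S : Type*} [Semiring R] [Semiring A] [Semiring S]
    (ι : R →+* A) (ψ : A →+* S) {M : Set A} {u : A} (hu : IsLeftRegular u) {g : A → R}
    (hg : ∀ x ∈ M, u * x = ι (g x)) (hinj : Set.InjOn (ψ.comp ι) (g '' M)) :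
    Set.InjOn ψ M := by
  intro x hx y hy hxy
  apply hu
  change u * x = u * y
  rw [hg x hx, hg y hy]
  refine congrArg ι (hinj (Set.mem_image_of_mem g hx) (Set.mem_image_of_mem g hy) ?_)
  simp only [RingHom.comp_apply, ← hg x hx, ← hg y hy, map_mul, hxy]

lemma isLeftRegular_iotaBin (R : Type*) [CommRing R] [IsDomain R] [CharZero R]
    (c : intNonzero R) : IsLeftRegular (iotaBin R c) := fun _ _ hxy =>
  Subtype.ext <| (IsLocalization.map_units (Localization (intNonzero R)) c).isRegular.left
    (congrArg Subtype.val hxy)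

lemma exists_iotaBin_mul_eq_iotaBin (R : Type*) [CommRing R] [IsDomain R] [CharZero R]
    (M : Finset (binClosure R)) :
    ∃ c : intNonzero R, ∀ x ∈ M, ∃ r : R, iotaBin R c * x = iotaBin R r := by
  classical
  obtain ⟨c, hc⟩ := IsLocalization.exist_integer_multiples_of_finset (intNonzero R)
    (M.image Subtype.val)
  refine ⟨c, fun x hx => ?_⟩
  obtain ⟨r, hr⟩ := hc x (Finset.mem_image_of_mem _ hx)
  exact ⟨r, Subtype.ext ((Algebra.smul_def _ _).symm.trans hr.symm)⟩

theorem binClosure_discriminated_general (R S : Type*) [CommRing R] [IsDomain R] [CharZero R]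
    [CommRing S]
    {J : Type*} (φ : J → (R →+* S))
    (hdisc : ∀ M : Finset R, ∃ j : J, Set.InjOn (φ j) M)
    (φ' : J → (binClosure R →+* S))
    (hext : ∀ j : J, (φ' j).comp (iotaBin R) = φ j) :
    ∀ M : Finset (binClosure R), ∃ j : J, Set.InjOn (φ' j) M := by
  classical
  intro M
  obtain ⟨c, hc⟩ := exists_iotaBin_mul_eq_iotaBin R M
  choose! g hg using hc
  obtain ⟨j, hj⟩ := hdisc (M.image g)
  refine ⟨j, Set.InjOn.of_isLeftRegular_mul (iotaBin R) (φ' j)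
    (isLeftRegular_iotaBin R c) hg ?_⟩
  rwa [hext j, ← Finset.coe_image]

/-- if a family `{φ_j : R → S}` of ring homomorphisms into a binomial ring `S`
discriminates `R` (for every finite `M ⊆ R` some `φ_j` is injective on `M`), and
`φ_j' : R^bin → S` extends `φ_j` for each `j`, then the family `{φ_j'}` discriminates
`R^bin`. -/
theorem binClosure_discriminated (R S : Type*) [CommRing R] [IsDomain R] [CharZero R]
    [CommRing S] [IsDomain S] [CharZero S] (hS : IsBinomialRing S)
    {J : Type*} (φ : J → (R →+* S))
    (hdisc : ∀ M : Finset R, ∃ j : J, Set.InjOn (φ j) M)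
    (φ' : J → (binClosure R →+* S))
    (hext : ∀ j : J, (φ' j).comp (iotaBin R) = φ j) :
    ∀ M : Finset (binClosure R), ∃ j : J, Set.InjOn (φ' j) M :=
  binClosure_discriminated_general R S φ hdisc φ' hext
end

section
/- Let R be an integral domain of characteristic zero that is discriminated by the ring of p-adic integers ℤ_[p], i.e., for every finite subset M ⊆ R there exists a ring homomorphism R → ℤ_[p] injective on M. Then the binomial closure R^bin of R is also discriminated by ℤ_[p]: for every finite subset M ⊆ R^bin there exists a ring homomorphism R^bin → ℤ_[p] injective on M. -/
/-! Given finitely many elements of `R^bin`, write each nonzero difference of two of them as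
`r / s` with `0 ≠ r ∈ R` and `s` a nonzero integer, and take `f : R → ℤ_[p]` injective on these
numerators together with `0`. As `f` sends nonzero integers to units of `ℚ_[p]`, it extends to
`L → ℚ_[p]`. The preimage of `ℤ_[p]` is binomially closed because `ℤ_[p]` is a binomial ring, so
it contains `R^bin`, and the extension keeps the chosen differences nonzero. -/

open scoped Nat

lemma isBinomialRing_of_binomialRing (S : Type*) [CommRing S] [BinomialRing S] :
    IsBinomialRing S := fun x n =>
  ⟨Ring.choose x n, by
    rw [← nsmul_eq_mul, ← Ring.descPochhammer_eq_factorial_smul_choose,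
      ← Polynomial.aeval_eq_smeval, Polynomial.aeval_def, ← Polynomial.eval_map,
      descPochhammer_map, descPochhammer_eval_eq_prod_range]⟩

section Binom

variable {L K : Type*} [CommRing L] [CommRing K]

lemma factorial_mul_binom {n : ℕ} (hn : IsUnit (n ! : L)) (x : L) :
    n ! * binom x n = ∏ i ∈ Finset.range n, (x - i) := by
  rw [binom, mul_comm, mul_assoc, Ring.inverse_mul_cancel _ hn, mul_one]

lemma binom_eq_of_factorial_mul_eq {n : ℕ} (hn : IsUnit (n ! : K)) {x y : K}
    (h : n ! * y = ∏ i ∈ Finset.range n, (x - i)) : binom x n = y :=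
  hn.mul_left_cancel (by rw [factorial_mul_binom hn, h])

lemma map_binom (g : L →+* K) {n : ℕ} (hn : IsUnit (n ! : L)) (x : L) :
    g (binom x n) = binom (g x) n :=
  (binom_eq_of_factorial_mul_eq (map_natCast g _ ▸ hn.map g) (by
    rw [← map_natCast g, ← map_mul, factorial_mul_binom hn, map_prod]
    simp only [map_sub, map_natCast])).symm

end Binom

lemma binClosed_comap {L K : Type*} [CommRing L] [Field K] [CharZero K] (g : L →+* K)
    (hL : ∀ n : ℕ, IsUnit (n ! : L)) (S : Subring K) (hS : IsBinomialRing S) :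
    BinClosed (S.comap g) := by
  intro x hx n
  obtain ⟨y, hy⟩ := hS ⟨g x, hx⟩ n
  have hK : IsUnit (n ! : K) := (Nat.cast_ne_zero.2 n.factorial_ne_zero).isUnit
  show g (binom x n) ∈ S
  have hy' : (n ! : K) * y = ∏ i ∈ Finset.range n, (g x - i) := by
    simpa using congrArg Subtype.val hy
  rw [map_binom g (hL n), binom_eq_of_factorial_mul_eq hK hy']
  exact y.2

section IntNonzero

variable {R : Type*} [CommRing R] [IsDomain R] {K : Type*} [Field K] [CharZero K]

lemma isUnit_map_intNonzero (f : R →+* K) (y : intNonzero R) : IsUnit (f y) := by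
  obtain ⟨y, ⟨m, rfl⟩, hm⟩ := y
  rw [map_intCast]
  exact (Int.cast_ne_zero.2 (by rintro rfl; exact hm Int.cast_zero)).isUnit

noncomputable def intNonzeroLift (f : R →+* K) : Localization (intNonzero R) →+* K :=
  IsLocalization.lift (isUnit_map_intNonzero f)

lemma intNonzeroLift_ne_zero {f : R →+* K} {d : Localization (intNonzero R)}
    (h : f (IsLocalization.sec (intNonzero R) d).1 ≠ 0) : intNonzeroLift f d ≠ 0 := by
  intro hd
  apply h
  rw [← IsLocalization.lift_eq (S := Localization (intNonzero R)) (isUnit_map_intNonzero f),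
    ← IsLocalization.sec_spec, map_mul]
  exact mul_eq_zero_of_left hd _

lemma isUnit_factorial_localization [CharZero R] (n : ℕ) :
    IsUnit (n ! : Localization (intNonzero R)) := by
  rw [← map_natCast (algebraMap R _)]
  exact IsLocalization.map_units _
    (⟨n !, ⟨n !, Int.cast_natCast _⟩, Nat.cast_ne_zero.2 n.factorial_ne_zero⟩ : intNonzero R)

lemma binClosure_le_comap_intNonzeroLift [CharZero R] {S : Subring K} (hS : IsBinomialRing S)
    {f : R →+* K} (hf : ∀ r, f r ∈ S) : binClosure R ≤ S.comap (intNonzeroLift f) := by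
  refine sInf_le ⟨binClosed_comap _ isUnit_factorial_localization S hS, ?_⟩
  rintro _ ⟨r, rfl⟩
  simpa [intNonzeroLift, IsLocalization.lift_eq] using hf r

end IntNonzero

/-- if an integral domain `R` of characteristic zero is discriminated by the
`p`-adic integers `ℤ_[p]` (for every finite `M ⊆ R` there is a ring homomorphism
`R → ℤ_[p]` injective on `M`), then its binomial closure `R^bin` is also discriminated
by `ℤ_[p]`. -/
theorem binClosure_discriminated_by_padicInt (p : ℕ) [Fact p.Prime]
    (R : Type*) [CommRing R] [IsDomain R] [CharZero R]
    (hdisc : ∀ M : Finset R, ∃ f : R →+* ℤ_[p], Set.InjOn f M) :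
    ∀ M : Finset (binClosure R), ∃ g : binClosure R →+* ℤ_[p], Set.InjOn g M := by
  classical
  intro M
  let num (d : Localization (intNonzero R)) : R := (IsLocalization.sec (intNonzero R) d).1
  obtain ⟨f, hf⟩ := hdisc (insert 0 ((M ×ˢ M).image fun q => num (q.1 - q.2)))
  let f' : R →+* ℚ_[p] := PadicInt.Coe.ringHom.comp f
  have hle : binClosure R ≤ (PadicInt.subring p).comap (intNonzeroLift f') :=
    binClosure_le_comap_intNonzeroLift (S := PadicInt.subring p)
      (isBinomialRing_of_binomialRing ℤ_[p]) fun r => (f r).2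
  refine ⟨(intNonzeroLift f').restrict _ (PadicInt.subring p) hle, fun x hx y hy hxy => ?_⟩
  by_contra hne
  have hxy_mem : num (x - y) ∈ insert 0 ((M ×ˢ M).image fun q => num (q.1 - q.2)) :=
    Finset.mem_insert_of_mem (Finset.mem_image.2 ⟨(x, y), Finset.mem_product.2 ⟨hx, hy⟩, rfl⟩)
  have hnum : f (num (x - y)) ≠ 0 := fun h0 =>
    IsLocalization.sec_fst_ne_zero (M := intNonzero R) (sub_ne_zero.2 (Subtype.coe_ne_coe.2 hne))
      (hf hxy_mem (Finset.mem_insert_self _ _) (h0.trans (map_zero f).symm))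
  refine intNonzeroLift_ne_zero (f := f') (d := x - y) (mt PadicInt.coe_eq_zero.1 hnum) ?_
  rw [map_sub, sub_eq_zero]
  exact congrArg Subtype.val hxy
end
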